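/- Let T_0, T_1, …, T_n be independent and identically distributed real-valued random variables whose common law has no atoms, and define the empirical p-value π = (1 + #{i ∈ {1,…,n} : T_i ≤ T_0})/(n+1). Then for every α ∈ (0,1), P(π ≤ α) = ⌊α(n+1)⌋/(n+1) ≤ α. -/

import Mathlib

open MeasureTheory ProbabilityTheory

lemma filter_card_comp_perm {m : ℕ} (σ : Equiv.Perm (Fin m)) (p : Fin m → Prop) [DecidablePred p] :
    (Finset.univ.filter fun i => p (σ i)).card = (Finset.univ.filter p).card := by
  rw [← Finset.card_image_of_injective (Finset.univ.filter fun i => p (σ i)) σ.injective]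
  congr 1
  ext b
  simp only [Finset.mem_image, Finset.mem_filter, Finset.mem_univ, true_and]
  constructor
  · rintro ⟨a, ha, rfl⟩; exact ha
  · intro hb; exact ⟨σ.symm b, by simpa using hb, by simp⟩

lemma rank_filter_card {m : ℕ} (x : Fin m → ℝ)
    (hx : ∀ i j : Fin m, i ≠ j → x i ≠ x j) (k : ℕ) (hk : k ≤ m) :
    (Finset.univ.filter fun j : Fin m =>
      (Finset.univ.filter fun i : Fin m => x i ≤ x j).card ≤ k).card = k := by
  classical
  set r : Fin m → ℕ := fun j => (Finset.univ.filter fun i : Fin m => x i ≤ x j).card with hr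
  have hmono : ∀ j j', x j < x j' → r j < r j' := by
    intro j j' h
    apply Finset.card_lt_card
    rw [Finset.ssubset_def]
    constructor
    · intro i hi
      simp only [Finset.mem_filter, Finset.mem_univ, true_and] at hi ⊢
      exact hi.trans h.le
    · intro hsub
      have hj' : j' ∈ Finset.univ.filter fun i => x i ≤ x j' := by simp
      have := hsub hj'
      simp only [Finset.mem_filter, Finset.mem_univ, true_and] at this
      exact absurd this (not_le.2 h)
  have hinj : Function.Injective r := by
    intro j j' h
    by_contra hne
    rcases lt_trichotomy (x j) (x j') with hlt | heq | hgt
    · exact absurd h (hmono j j' hlt).ne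
    · exact hx j j' hne heq
    · exact absurd h.symm (hmono j' j hgt).ne
  have h1 : ∀ j, 1 ≤ r j ∧ r j ≤ m := by
    intro j
    constructor
    · refine Finset.card_pos.2 ⟨j, ?_⟩; simp
    · exact (Finset.card_filter_le _ _).trans (by simp)
  have himg : Finset.univ.image r = Finset.Icc 1 m := by
    apply Finset.eq_of_subset_of_card_le
    · intro b hb
      simp only [Finset.mem_image] at hb
      obtain ⟨j, _, rfl⟩ := hb
      simp only [Finset.mem_Icc]
      exact h1 j
    · rw [Finset.card_image_of_injective _ hinj]
      simp [Nat.card_Icc]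
  calc (Finset.univ.filter fun j => r j ≤ k).card
      = ((Finset.univ.filter fun j => r j ≤ k).image r).card :=
        (Finset.card_image_of_injective _ hinj).symm
    _ = ((Finset.univ.image r).filter fun b => b ≤ k).card := by
        rw [Finset.filter_image]
    _ = ((Finset.Icc 1 m).filter fun b => b ≤ k).card := by rw [himg]
    _ = (Finset.Icc 1 k).card := by
        congr 1
        ext b
        simp only [Finset.mem_filter, Finset.mem_Icc]
        omega
    _ = k := by simp [Nat.card_Icc]

/-- Finite-sample validity of the empirical conformal p-value: for i.i.d.
`T 0, T 1, …, T n` with atomless common law and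
`π = (1 + #{i ∈ {1,…,n} : T i ≤ T 0}) / (n + 1)`, for every `α ∈ (0,1)` we have
`P(π ≤ α) = ⌊α (n+1)⌋ / (n+1) ≤ α`. -/
theorem empirical_p_value_valid
    {Ω : Type*} [MeasurableSpace Ω] (P : Measure Ω) [IsProbabilityMeasure P]
    (n : ℕ) (T : Fin (n + 1) → Ω → ℝ)
    (hmeas : ∀ i, Measurable (T i))
    (hindep : iIndepFun T P)
    (μ : Measure ℝ) (hlaw : ∀ i, Measure.map (T i) P = μ)
    (hμ : ∀ x : ℝ, μ {x} = 0)
    (π : Ω → ℝ)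
    (hπ : π = fun ω =>
      (1 + ((Finset.univ.filter fun i : Fin n => T i.succ ω ≤ T 0 ω).card : ℝ)) / (n + 1))
    (α : ℝ) (hα : α ∈ Set.Ioo (0 : ℝ) 1) :
    P {ω | π ω ≤ α} = ENNReal.ofReal ((⌊α * (n + 1)⌋ : ℝ) / (n + 1)) ∧
      ENNReal.ofReal ((⌊α * (n + 1)⌋ : ℝ) / (n + 1)) ≤ ENNReal.ofReal α := by
  classical
  obtain ⟨hα0, hα1⟩ := hα
  have hn1 : (0 : ℝ) < (n : ℝ) + 1 := by positivity
  have hfloor0 : 0 ≤ ⌊α * ((n : ℝ) + 1)⌋ := Int.floor_nonneg.2 (by positivity)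
  set k : ℕ := (⌊α * ((n : ℝ) + 1)⌋).toNat with hkdef
  have hkR : ((k : ℝ)) = ((⌊α * ((n : ℝ) + 1)⌋ : ℤ) : ℝ) := by
    rw [hkdef]; exact_mod_cast Int.toNat_of_nonneg hfloor0
  have hkn : k ≤ n := by
    have h1 : (⌊α * ((n : ℝ) + 1)⌋ : ℝ) < (n : ℝ) + 1 := by
      calc (⌊α * ((n : ℝ) + 1)⌋ : ℝ) ≤ α * ((n : ℝ) + 1) := Int.floor_le _
        _ < 1 * ((n : ℝ) + 1) := by nlinarith
        _ = (n : ℝ) + 1 := by ring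
    have h2 : ⌊α * ((n : ℝ) + 1)⌋ < (n : ℤ) + 1 := by exact_mod_cast h1
    omega
  -- μ is a probability measure
  have hμprob : IsProbabilityMeasure μ := by
    rw [← hlaw 0]; exact Measure.isProbabilityMeasure_map (hmeas 0).aemeasurable
  set ν : Measure (Fin (n + 1) → ℝ) := Measure.pi (fun _ => μ) with hνdef
  haveI : IsProbabilityMeasure ν := by rw [hνdef]; infer_instance
  set J : Ω → (Fin (n + 1) → ℝ) := fun ω i => T i ω with hJdef
  have hJmeas : Measurable J := measurable_pi_lambda _ hmeas
  -- joint law is the product measure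
  have hmap : Measure.map J P = ν := by
    rw [hνdef]
    refine (Measure.pi_eq fun s hs => ?_).symm
    rw [Measure.map_apply hJmeas (MeasurableSet.univ_pi hs)]
    have hpre : J ⁻¹' Set.pi Set.univ s = ⋂ i, T i ⁻¹' s i := by
      ext ω
      simp [hJdef, Set.mem_pi, Set.mem_iInter]
    rw [hpre]
    have h := hindep.measure_inter_preimage_eq_mul Finset.univ (fun i _ => hs i)
    simp only [Finset.mem_univ, Set.iInter_true] at h
    rw [h]
    refine Finset.prod_congr rfl fun i _ => ?_
    rw [← hlaw i, Measure.map_apply (hmeas i) (hs i)]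
  -- rank function
  set rnk : (Fin (n + 1) → ℝ) → Fin (n + 1) → ℕ :=
    fun x j => (Finset.univ.filter fun i => x i ≤ x j).card with hrnkdef
  have hrnkmeas : ∀ j, Measurable fun x => rnk x j := by
    intro j
    have h : (fun x => rnk x j)
        = fun x : Fin (n + 1) → ℝ => ∑ i : Fin (n + 1), if x i ≤ x j then 1 else 0 := by
      funext x
      show (Finset.univ.filter fun i => x i ≤ x j).card = _
      rw [Finset.card_filter]
    rw [h]
    exact Finset.measurable_sum _ fun i _ =>
      Measurable.ite (measurableSet_le (measurable_pi_apply i) (measurable_pi_apply j))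
        measurable_const measurable_const
  have hEmeas : ∀ j, MeasurableSet {x : Fin (n + 1) → ℝ | rnk x j ≤ k} :=
    fun j => measurableSet_le (hrnkmeas j) measurable_const
  -- permutation invariance of ν
  have hperm : ∀ σ : Equiv.Perm (Fin (n + 1)),
      Measure.map (fun x (i : Fin (n + 1)) => x (σ i)) ν = ν := by
    intro σ
    have hm : Measurable (fun x : Fin (n + 1) → ℝ => fun i => x (σ i)) :=
      measurable_pi_lambda _ fun i => measurable_pi_apply (σ i)
    rw [hνdef]
    refine (Measure.pi_eq fun s hs => ?_).symm
    rw [Measure.map_apply hm (MeasurableSet.univ_pi hs)]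
    have hpre : (fun x : Fin (n + 1) → ℝ => fun i => x (σ i)) ⁻¹' Set.pi Set.univ s
        = Set.pi Set.univ (fun i => s (σ.symm i)) := by
      ext x
      simp only [Set.mem_preimage, Set.mem_pi, Set.mem_univ, true_implies]
      constructor
      · intro h i; have := h (σ.symm i); simpa using this
      · intro h i; have := h (σ i); simpa using this
    rw [hpre, Measure.pi_pi]
    exact Equiv.prod_comp σ.symm (fun i => μ (s i))
  have hrnk_comp : ∀ (σ : Equiv.Perm (Fin (n + 1))) (x : Fin (n + 1) → ℝ) (l : Fin (n + 1)),
      rnk (fun i => x (σ i)) l = rnk x (σ l) := by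
    intro σ x l
    exact filter_card_comp_perm σ (fun i => x i ≤ x (σ l))
  -- exchangeability
  have hexch : ∀ j, ν {x | rnk x j ≤ k} = ν {x | rnk x 0 ≤ k} := by
    intro j
    set σ : Equiv.Perm (Fin (n + 1)) := Equiv.swap 0 j with hσ
    have hm : Measurable (fun x : Fin (n + 1) → ℝ => fun i => x (σ i)) :=
      measurable_pi_lambda _ fun i => measurable_pi_apply (σ i)
    calc ν {x | rnk x j ≤ k}
        = Measure.map (fun x (i : Fin (n + 1)) => x (σ i)) ν {x | rnk x j ≤ k} := by
          rw [hperm σ]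
      _ = ν ((fun x (i : Fin (n + 1)) => x (σ i)) ⁻¹' {x | rnk x j ≤ k}) :=
          Measure.map_apply hm (hEmeas j)
      _ = ν {x | rnk x 0 ≤ k} := by
          congr 1
          ext x
          simp only [Set.mem_preimage, Set.mem_setOf_eq]
          rw [hrnk_comp σ x j, hσ]
          rw [Equiv.swap_apply_right]
  -- a.e. no ties
  have hpair : ∀ i j : Fin (n + 1), i ≠ j → ν {x | x i = x j} = 0 := by
    intro i j hij
    have hd : MeasurableSet {p : ℝ × ℝ | p.1 = p.2} :=
      measurableSet_eq_fun measurable_fst measurable_snd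
    have hprod : (μ.prod μ) {p : ℝ × ℝ | p.1 = p.2} = 0 := by
      rw [Measure.prod_apply hd]
      have h : ∀ a : ℝ, (Prod.mk a ⁻¹' {p : ℝ × ℝ | p.1 = p.2}) = {a} := by
        intro a; ext y; simp [eq_comm]
      simp only [h]
      simp [hμ]
    have hpm : Measure.map (fun ω => (T i ω, T j ω)) P = μ.prod μ := by
      have h := (indepFun_iff_map_prod_eq_prod_map_map (hmeas i).aemeasurable
        (hmeas j).aemeasurable).1 (hindep.indepFun hij)
      rw [hlaw i, hlaw j] at h
      exact h
    have hset : MeasurableSet {x : Fin (n + 1) → ℝ | x i = x j} :=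
      measurableSet_eq_fun (measurable_pi_apply i) (measurable_pi_apply j)
    rw [← hmap, Measure.map_apply hJmeas hset]
    have hpre : J ⁻¹' {x : Fin (n + 1) → ℝ | x i = x j}
        = (fun ω => (T i ω, T j ω)) ⁻¹' {p : ℝ × ℝ | p.1 = p.2} := rfl
    rw [hpre, ← Measure.map_apply ((hmeas i).prodMk (hmeas j)) hd, hpm, hprod]
  have hN : ∀ᵐ x ∂ν, ∀ i j : Fin (n + 1), i ≠ j → x i ≠ x j := by
    rw [ae_iff]
    have hsub : {x : Fin (n + 1) → ℝ | ¬ ∀ i j : Fin (n + 1), i ≠ j → x i ≠ x j}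
        ⊆ ⋃ (i) (j) (_ : i ≠ j), {x : Fin (n + 1) → ℝ | x i = x j} := by
      intro x hx
      simp only [Set.mem_setOf_eq] at hx
      push_neg at hx
      obtain ⟨i, j, hij, h⟩ := hx
      exact Set.mem_iUnion.2 ⟨i, Set.mem_iUnion.2 ⟨j, Set.mem_iUnion.2 ⟨hij, h⟩⟩⟩
    refine measure_mono_null hsub ?_
    refine measure_iUnion_null fun i => measure_iUnion_null fun j =>
      measure_iUnion_null fun hij => hpair i j hij
  -- sum over j of probabilities equals k
  have hsum : ∑ j : Fin (n + 1), ν {x | rnk x j ≤ k} = (k : ENNReal) := by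
    have h1 : ∀ j : Fin (n + 1), ν {x | rnk x j ≤ k}
        = ∫⁻ x, Set.indicator {x | rnk x j ≤ k} (fun _ => 1) x ∂ν :=
      fun j => (lintegral_indicator_one (hEmeas j)).symm
    calc ∑ j : Fin (n + 1), ν {x | rnk x j ≤ k}
        = ∑ j : Fin (n + 1), ∫⁻ x, Set.indicator {x | rnk x j ≤ k} (fun _ => 1) x ∂ν :=
          Finset.sum_congr rfl fun j _ => h1 j
      _ = ∫⁻ x, ∑ j : Fin (n + 1), Set.indicator {x | rnk x j ≤ k} (fun _ => 1) x ∂ν :=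
          (lintegral_finset_sum _ fun j _ => measurable_const.indicator (hEmeas j)).symm
      _ = ∫⁻ _, (k : ENNReal) ∂ν := by
          refine lintegral_congr_ae ?_
          filter_upwards [hN] with x hx
          have he : ∀ j, Set.indicator {y : Fin (n + 1) → ℝ | rnk y j ≤ k}
              (fun _ => (1 : ENNReal)) x = if rnk x j ≤ k then 1 else 0 := by
            intro j
            by_cases h : rnk x j ≤ k
            · simp [Set.indicator_of_mem, h]
            · simp [Set.indicator_of_notMem, h]
          simp only [he]
          rw [Finset.sum_boole]
          norm_cast
          exact rank_filter_card x hx k (hkn.trans (Nat.le_succ n))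
      _ = (k : ENNReal) := by simp
  have hE0 : ν {x | rnk x 0 ≤ k} = (k : ENNReal) / ((n : ENNReal) + 1) := by
    have hmain : ((n : ENNReal) + 1) * ν {x | rnk x 0 ≤ k} = (k : ENNReal) := by
      rw [← hsum, Finset.sum_congr rfl fun j _ => hexch j, Finset.sum_const,
        Finset.card_univ, Fintype.card_fin, nsmul_eq_mul]
      push_cast
      ring
    rw [ENNReal.eq_div_iff (by simp) (by simp)]
    exact hmain
  -- identify the event
  have hcnt : ∀ ω, rnk (J ω) 0
      = 1 + (Finset.univ.filter fun i : Fin n => T i.succ ω ≤ T 0 ω).card := by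
    intro ω
    show (Finset.univ.filter fun i : Fin (n + 1) => T i ω ≤ T 0 ω).card = _
    rw [Finset.card_filter, Fin.sum_univ_succ]
    simp only [le_refl, if_true]
    congr 1
    rw [Finset.card_filter]
  have hevent : {ω | π ω ≤ α} = J ⁻¹' {x | rnk x 0 ≤ k} := by
    ext ω
    simp only [Set.mem_setOf_eq, Set.mem_preimage, hπ]
    rw [hcnt ω]
    set c : ℕ := (Finset.univ.filter fun i : Fin n => T i.succ ω ≤ T 0 ω).card with hc
    constructor
    · intro h
      have h2 : (1 + (c : ℝ)) ≤ α * ((n : ℝ) + 1) := by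
        rwa [div_le_iff₀ hn1] at h
      have h3 : (((1 + c : ℕ) : ℤ) : ℝ) ≤ α * ((n : ℝ) + 1) := by push_cast; linarith
      have h4 : ((1 + c : ℕ) : ℤ) ≤ ⌊α * ((n : ℝ) + 1)⌋ := Int.le_floor.2 h3
      omega
    · intro h
      have h4 : ((1 + c : ℕ) : ℤ) ≤ ⌊α * ((n : ℝ) + 1)⌋ := by omega
      have h3 : (((1 + c : ℕ) : ℤ) : ℝ) ≤ α * ((n : ℝ) + 1) :=
        le_trans (by exact_mod_cast h4) (Int.floor_le _)
      rw [div_le_iff₀ hn1]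
      push_cast at h3 ⊢
      linarith
  constructor
  · rw [hevent, ← Measure.map_apply hJmeas (hEmeas 0), hmap, hE0,
      ENNReal.ofReal_div_of_pos hn1, ← hkR, ENNReal.ofReal_natCast]
    congr 1
    rw [show ((n : ℝ) + 1) = ((n + 1 : ℕ) : ℝ) by push_cast; ring, ENNReal.ofReal_natCast]
    push_cast
    ring
  · apply ENNReal.ofReal_le_ofReal
    rw [div_le_iff₀ hn1]
    exact Int.floor_le _
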